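/- Let k be a field of characteristic 2 and let G = ⟨x⟩ × ⟨y⟩ be the Klein four group (x, y of order 2). For each c ∈ k, the assignment x ↦ [[1,1],[0,1]], y ↦ [[1,c],[0,1]] defines a 2-dimensional k-linear representation ρ_c of G. Each ρ_c is indecomposable, and for c, c' ∈ k the representations ρ_c and ρ_{c'} are isomorphic as kG-modules if and only if c = c'. -/

import Mathlib

/-- The Klein four group, with generators `x = (1,0)` and `y = (0,1)`. -/
abbrev KleinFour : Type := Multiplicative (ZMod 2 × ZMod 2)

/-- `MatchesRho c ρ` says that the representation `ρ` of the Klein four group realizes the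
assignment `x ↦ [[1,1],[0,1]]`, `y ↦ [[1,c],[0,1]]` on the two generators. -/
def MatchesRho {k : Type*} [Field k] (c : k)
    (ρ : Representation k KleinFour (Fin 2 → k)) : Prop :=
  ρ (Multiplicative.ofAdd (1, 0)) = Matrix.toLin' !![1, 1; 0, 1] ∧
  ρ (Multiplicative.ofAdd (0, 1)) = Matrix.toLin' !![1, c; 0, 1]

section Aux

variable {k : Type*} [Field k] [CharP k 2]

lemma aux_toLin_apply (s : k) (w : Fin 2 → k) :
    Matrix.toLin' !![1, s; 0, 1] w = ![w 0 + s * w 1, w 1] := by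
  funext i
  fin_cases i <;>
    simp [Matrix.toLin'_apply, Matrix.mulVec, dotProduct, Fin.sum_univ_two]

/-- The additive character sending `(a,b)` to `a + b*c`. -/
noncomputable def auxPhi (c : k) : KleinFour → k := fun g =>
  ZMod.castHom dvd_rfl k g.toAdd.1 + ZMod.castHom dvd_rfl k g.toAdd.2 * c

lemma aux_matmul (s t : k) : !![1, s; 0, 1] * !![1, t; 0, 1] = !![1, s + t; 0, 1] := by
  norm_num [Matrix.mul_fin_two]
  ring

/-- The representation `ρ_c`. -/
noncomputable def auxRho (c : k) : Representation k KleinFour (Fin 2 → k) where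
  toFun g := Matrix.toLin' !![1, auxPhi c g; 0, 1]
  map_one' := by
    show Matrix.toLin' !![1, auxPhi c 1; 0, 1] = 1
    have h : auxPhi c 1 = 0 := by simp [auxPhi]
    rw [h, show !![(1:k), 0; 0, 1] = 1 from (Matrix.one_fin_two).symm, Matrix.toLin'_one]
    rfl
  map_mul' g h := by
    show Matrix.toLin' !![1, auxPhi c (g * h); 0, 1] =
      Matrix.toLin' !![1, auxPhi c g; 0, 1] * Matrix.toLin' !![1, auxPhi c h; 0, 1]
    have hp : auxPhi c (g * h) = auxPhi c g + auxPhi c h := by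
      simp [auxPhi]; ring_nf
    rw [hp, ← aux_matmul, Matrix.toLin'_mul]
    rfl

lemma auxRho_matches (c : k) : MatchesRho c (auxRho c) := by
  constructor
  · show Matrix.toLin' !![1, auxPhi c (Multiplicative.ofAdd ((1 : ZMod 2), (0 : ZMod 2))); 0, 1] = _
    congr 1
    simp [auxPhi]
  · show Matrix.toLin' !![1, auxPhi c (Multiplicative.ofAdd ((0 : ZMod 2), (1 : ZMod 2))); 0, 1] = _
    congr 1
    simp [auxPhi]

lemma aux_ksmul_mem (ρ : Representation k KleinFour (Fin 2 → k))
    (N : Submodule (MonoidAlgebra k KleinFour) ρ.asModule) (a : k) (w : ρ.asModule)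
    (hw : w ∈ N) : a • w ∈ N := by
  have h : a • w = (algebraMap k (MonoidAlgebra k KleinFour) a) • w := by
    show a • w = ρ.asAlgebraHom (algebraMap k (MonoidAlgebra k KleinFour) a) w
    rw [AlgHom.commutes]
    rfl
  rw [h]
  exact N.smul_mem _ hw

lemma aux_rho_smul_mem (ρ : Representation k KleinFour (Fin 2 → k))
    (N : Submodule (MonoidAlgebra k KleinFour) ρ.asModule) (g : KleinFour) (w : ρ.asModule)
    (hw : w ∈ N) : (ρ g w : ρ.asModule) ∈ N := by
  have h : (ρ g w : ρ.asModule) = (MonoidAlgebra.single g (1 : k)) • w := by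
    show _ = ρ.asAlgebraHom (MonoidAlgebra.single g (1 : k)) w
    rw [Representation.asAlgebraHom_single, one_smul]
  rw [h]
  exact N.smul_mem _ hw

lemma aux_sub_apply (ρ : Representation k KleinFour (Fin 2 → k)) (a b : ρ.asModule)
    (i : Fin 2) : (a - b) i = a i - b i := rfl

lemma aux_add_apply (ρ : Representation k KleinFour (Fin 2 → k)) (a b : ρ.asModule)
    (i : Fin 2) : (a + b) i = a i + b i := rfl

lemma aux_smul_apply (ρ : Representation k KleinFour (Fin 2 → k)) (a : k) (b : ρ.asModule)
    (i : Fin 2) : (a • b) i = a * b i := rfl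

/-- A submodule containing a vector with nonzero second coordinate is everything. -/
lemma aux_eq_top (c : k) (ρ : Representation k KleinFour (Fin 2 → k)) (hρ : MatchesRho c ρ)
    (N : Submodule (MonoidAlgebra k KleinFour) ρ.asModule) (v : ρ.asModule)
    (hv : v ∈ N) (hv1 : v 1 ≠ 0) : N = ⊤ := by
  set E0 : ρ.asModule := ![1, 0] with hE0def
  set E1 : ρ.asModule := ![0, 1] with hE1def
  have h1 : (MonoidAlgebra.single (Multiplicative.ofAdd ((1 : ZMod 2), (0 : ZMod 2))) (1 : k)) • v
      - v ∈ N := N.sub_mem (N.smul_mem _ hv) hv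
  have h2 : (MonoidAlgebra.single (Multiplicative.ofAdd ((1 : ZMod 2), (0 : ZMod 2))) (1 : k)) • v
      - v = (v 1) • E0 := by
    have hs : (MonoidAlgebra.single (Multiplicative.ofAdd ((1 : ZMod 2), (0 : ZMod 2))) (1 : k)) • v
        = ρ.asAlgebraHom (MonoidAlgebra.single (Multiplicative.ofAdd ((1 : ZMod 2), (0 : ZMod 2)))
          (1 : k)) v := rfl
    rw [hs, Representation.asAlgebraHom_single, one_smul, hρ.1]
    erw [aux_toLin_apply]
    funext i
    fin_cases i <;> simp [hE0def, aux_sub_apply, aux_smul_apply]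
    all_goals (erw [aux_sub_apply ρ, aux_smul_apply ρ]; simp)
  have hE0 : E0 ∈ N := by
    have := aux_ksmul_mem ρ N (v 1)⁻¹ _ h1
    rwa [h2, smul_smul, inv_mul_cancel₀ hv1, one_smul] at this
  have hE1 : E1 ∈ N := by
    have h3 : (v - (v 0) • E0 : ρ.asModule) ∈ N :=
      N.sub_mem hv (aux_ksmul_mem ρ N (v 0) _ hE0)
    have h4 : (v - (v 0) • E0 : ρ.asModule) = (v 1) • E1 := by
      funext i
      fin_cases i <;> simp [hE0def, hE1def, aux_sub_apply, aux_smul_apply, Pi.smul_apply]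
      all_goals (erw [aux_smul_apply ρ, aux_smul_apply ρ]; simp)
    have := aux_ksmul_mem ρ N (v 1)⁻¹ _ h3
    rwa [h4, smul_smul, inv_mul_cancel₀ hv1, one_smul] at this
  rw [eq_top_iff]
  intro w _
  have hw : w = (w 0) • E0 + (w 1) • E1 := by
    funext i
    fin_cases i <;> simp [hE0def, hE1def, aux_add_apply, aux_smul_apply, Pi.smul_apply]
    all_goals (erw [aux_smul_apply ρ, aux_smul_apply ρ]; simp)
  rw [hw]
  exact N.add_mem (aux_ksmul_mem ρ N _ _ hE0) (aux_ksmul_mem ρ N _ _ hE1)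

end Aux

/-- Over a field `k` of characteristic 2, for each `c ∈ k` the assignment
`x ↦ [[1,1],[0,1]]`, `y ↦ [[1,c],[0,1]]` defines a 2-dimensional representation `ρ_c` of the
Klein four group; each `ρ_c` is indecomposable, and `ρ_c ≅ ρ_{c'}` as `kG`-modules
if and only if `c = c'`. -/
theorem stmt_14 (k : Type*) [Field k] [CharP k 2] (c : k) :
    (∃ ρ : Representation k KleinFour (Fin 2 → k), MatchesRho c ρ) ∧
    (∀ ρ : Representation k KleinFour (Fin 2 → k), MatchesRho c ρ →
      (Nontrivial ρ.asModule ∧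
        ∀ (N N' : Submodule (MonoidAlgebra k KleinFour) ρ.asModule),
          IsCompl N N' → N = ⊥ ∨ N' = ⊥)) ∧
    (∀ c' : k, ∀ ρ σ : Representation k KleinFour (Fin 2 → k),
      MatchesRho c ρ → MatchesRho c' σ →
      ((∃ e : (Fin 2 → k) ≃ₗ[k] (Fin 2 → k),
          ∀ (g : KleinFour) (w : Fin 2 → k), e (ρ g w) = σ g (e w)) ↔ c = c')) := by
  refine ⟨⟨auxRho c, auxRho_matches c⟩, ?_, ?_⟩
  · -- indecomposability
    intro ρ hρ
    refine ⟨ρ.asModuleEquiv.toEquiv.nontrivial, ?_⟩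
    intro N N' hc
    by_cases hN : ∃ v ∈ N, v 1 ≠ 0
    · obtain ⟨v, hv, hv1⟩ := hN
      right
      have hNtop := aux_eq_top c ρ hρ N v hv hv1
      rw [eq_bot_iff]
      intro w hw
      have : w ∈ N ⊓ N' := ⟨hNtop ▸ Submodule.mem_top, hw⟩
      rwa [hc.inf_eq_bot] at this
    · by_cases hN' : ∃ v ∈ N', v 1 ≠ 0
      · obtain ⟨v, hv, hv1⟩ := hN'
        left
        have hNtop := aux_eq_top c ρ hρ N' v hv hv1
        rw [eq_bot_iff]
        intro w hw
        have : w ∈ N ⊓ N' := ⟨hw, hNtop ▸ Submodule.mem_top⟩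
        rwa [hc.inf_eq_bot] at this
      · exfalso
        push_neg at hN hN'
        have htop : N ⊔ N' = ⊤ := hc.sup_eq_top
        have hmem : (show ρ.asModule from ![0, 1]) ∈ N ⊔ N' := htop ▸ Submodule.mem_top
        obtain ⟨n, hn, n', hn', heq⟩ := Submodule.mem_sup.mp hmem
        have h1 := congrFun heq 1
        have hn1 := hN n hn
        have hn'1 := hN' n' hn'
        have : (n + n' : ρ.asModule) 1 = n 1 + n' 1 := rfl
        rw [this, hn1, hn'1] at h1
        simp at h1
  · -- isomorphism iff c = c'
    intro c' ρ σ hρ hσ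
    constructor
    · rintro ⟨e, he⟩
      set E0 : Fin 2 → k := ![1, 0] with hE0def
      set E1 : Fin 2 → k := ![0, 1] with hE1def
      set u : Fin 2 → k := e E1 with hudef
      have hx := he (Multiplicative.ofAdd (1, 0)) E1
      rw [hρ.1, hσ.1, aux_toLin_apply, aux_toLin_apply] at hx
      have hE0split : (![E1 0 + 1 * E1 1, E1 1] : Fin 2 → k) = E1 + E0 := by
        funext i; fin_cases i <;> simp [hE0def, hE1def]
      rw [hE0split, map_add] at hx
      -- hx : e E1 + e E0 = ![u 0 + 1 * u 1, u 1]
      have heE0 : e E0 = ![u 1, 0] := by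
        funext i
        have h0 := congrFun hx i
        fin_cases i <;> simp at h0 ⊢ <;> linear_combination h0
      have hy := he (Multiplicative.ofAdd (0, 1)) E1
      rw [hρ.2, hσ.2, aux_toLin_apply, aux_toLin_apply] at hy
      have hE1split : (![E1 0 + c * E1 1, E1 1] : Fin 2 → k) = E1 + c • E0 := by
        funext i; fin_cases i <;> simp [hE0def, hE1def]
      rw [hE1split, map_add, map_smul, heE0] at hy
      have hy0 := congrFun hy 0
      -- hy0: u 0 + c * u 1 = u 0 + c' * u 1
      have hy0' : u 0 + c * u 1 = u 0 + c' * u 1 := by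
        simpa [hE1def, hudef] using hy0
      have hu1 : u 1 ≠ 0 := by
        intro h
        have : e E0 = 0 := by rw [heE0, h]; funext i; fin_cases i <;> simp
        have hE00 : E0 = 0 := e.injective (by simpa using this)
        have := congrFun hE00 0
        simp [hE0def] at this
      have : c * u 1 = c' * u 1 := by linear_combination hy0'
      exact mul_right_cancel₀ hu1 this
    · intro hcc
      subst hcc
      have hg : ∀ g : KleinFour, ρ g = σ g := by
        intro g
        obtain ⟨a, b⟩ := g
        have hsplit : (Multiplicative.ofAdd ((a, b) : ZMod 2 × ZMod 2)) =
            Multiplicative.ofAdd ((a, 0) : ZMod 2 × ZMod 2) *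
            Multiplicative.ofAdd ((0, b) : ZMod 2 × ZMod 2) := by
          rw [← ofAdd_add]
          simp
        have hcase : ∀ z : ZMod 2, z = 0 ∨ z = 1 := by decide
        have h1 : ρ (Multiplicative.ofAdd ((a, 0) : ZMod 2 × ZMod 2)) =
            σ (Multiplicative.ofAdd ((a, 0) : ZMod 2 × ZMod 2)) := by
          rcases hcase a with rfl | rfl
          · have : (Multiplicative.ofAdd (((0 : ZMod 2), (0 : ZMod 2)))) = 1 := rfl
            rw [this, map_one, map_one]
          · rw [hρ.1, hσ.1]
        have h2 : ρ (Multiplicative.ofAdd ((0, b) : ZMod 2 × ZMod 2)) =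
            σ (Multiplicative.ofAdd ((0, b) : ZMod 2 × ZMod 2)) := by
          rcases hcase b with rfl | rfl
          · have : (Multiplicative.ofAdd (((0 : ZMod 2), (0 : ZMod 2)))) = 1 := rfl
            rw [this, map_one, map_one]
          · rw [hρ.2, hσ.2]
        show ρ (Multiplicative.ofAdd (a, b)) = σ (Multiplicative.ofAdd (a, b))
        rw [hsplit, map_mul, map_mul, h1, h2]
      exact ⟨LinearEquiv.refl k (Fin 2 → k), fun g w => by simp [hg g]⟩
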